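/- Functions defined by the finite-order primitive recursion scheme are total computable: fix n ≥ 1 and suppose g : ℕ → ℕ, h : ℕ → ℕ → ℕ → ℕ and φ : ℕ → ℕ are total computable functions with φ(m) <_n m for every m ≥ 1. Then there exists a unique total function f : ℕ → ℕ → ℕ satisfying f(0, a) = g(0) and f(m, a) = h(a, m, f(φ(m), a)) for all m ≥ 1 and all a, and this f is computable. -/

import Mathlib

/-- `ν n` is the exponent of 2 in `n + 1` (the 2-adic valuation of `n+1`). -/
def nuFn (n : ℕ) : ℕ := (n + 1).factorization 2

/-- `θ n = ((n+1) / 2 ^ ν n - 1) / 2`, so that `n + 1 = 2 ^ ν n * (2 * θ n + 1)`. -/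
def thetaFn (n : ℕ) : ℕ := ((n + 1) / 2 ^ nuFn n - 1) / 2

/-- The order `<₁` on ℕ : compare the pairs `(ν n, θ n)` lexicographically. -/
def lt1 (n n' : ℕ) : Prop :=
  Prod.Lex (· < ·) (· < ·) (nuFn n, thetaFn n) (nuFn n', thetaFn n')

/-- `DecExpList r n l` : `l` lists the exponents of the binary expansion of `n`
in `r`-decreasing order. -/
def DecExpList (r : ℕ → ℕ → Prop) (n : ℕ) (l : List ℕ) : Prop :=
  l.Chain' (fun a b => r b a) ∧ ∀ i : ℕ, i ∈ l ↔ n.testBit i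

/-- The derived order `≺'` : compare the `r`-decreasing lists of binary exponents
lexicographically (via `List.Lex`, a proper initial segment counting as smaller):
either the lists agree up to position `k` and then `r` holds at position `k`, or the
first list is a proper prefix of the second. -/
def derivedOrder (r : ℕ → ℕ → Prop) (n n' : ℕ) : Prop :=
  ∃ l l' : List ℕ, DecExpList r n l ∧ DecExpList r n' l' ∧ List.Lex r l l'

/-- The orders `<_m` on ℕ (for `m ≥ 1`): `<₁` is `lt1`, and `<_{m+1}` is the
derived order of `<_m`.  (The value at `m = 0` is irrelevant; we set it to `lt1`.) -/
def ltm : ℕ → ℕ → ℕ → Prop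
  | 0 => lt1
  | 1 => lt1
  | (m + 2) => derivedOrder (ltm (m + 1))

open List Ordinal

/-- The properties of the orders we maintain through the induction. -/
structure GoodOrder (r : ℕ → ℕ → Prop) : Prop where
  trans : Transitive r
  total : ∀ a b : ℕ, a ≠ b → r a b ∨ r b a
  emb : ∃ O : ℕ → Ordinal.{0}, ∀ a b, r a b → O a < O b

lemma nu_theta_decomp (n : ℕ) : n + 1 = 2 ^ nuFn n * (2 * thetaFn n + 1) := by
  have h2 : ¬ (2 ∣ (n + 1) / 2 ^ nuFn n) :=
    Nat.not_dvd_ordCompl Nat.prime_two (Nat.succ_ne_zero n)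
  have hmod : (n + 1) / 2 ^ nuFn n % 2 = 1 := Nat.two_dvd_ne_zero.mp h2
  have hdm := Nat.div_add_mod ((n + 1) / 2 ^ nuFn n) 2
  have hmain := Nat.ordProj_mul_ordCompl_eq_self (n + 1) 2
  have hθ : 2 * thetaFn n + 1 = (n + 1) / 2 ^ nuFn n := by
    unfold thetaFn
    omega
  rw [hθ]
  exact hmain.symm

lemma nu_theta_inj {a b : ℕ} (h1 : nuFn a = nuFn b) (h2 : thetaFn a = thetaFn b) : a = b := by
  have := nu_theta_decomp a
  rw [h1, h2, ← nu_theta_decomp b] at this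
  omega

lemma lt1_iff {a b : ℕ} :
    lt1 a b ↔ nuFn a < nuFn b ∨ nuFn a = nuFn b ∧ thetaFn a < thetaFn b :=
  Prod.lex_iff

lemma good_lt1 : GoodOrder lt1 := by
  refine ⟨?_, ?_, ⟨fun m => ω * (nuFn m : Ordinal) + (thetaFn m : Ordinal), ?_⟩⟩
  · intro a b c h1 h2
    rw [lt1_iff] at *
    omega
  · intro a b hab
    rw [lt1_iff, lt1_iff]
    rcases Nat.lt_trichotomy (nuFn a) (nuFn b) with h | h | h
    · exact Or.inl (Or.inl h)
    · rcases Nat.lt_trichotomy (thetaFn a) (thetaFn b) with h' | h' | h'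
      · exact Or.inl (Or.inr ⟨h, h'⟩)
      · exact absurd (nu_theta_inj h h') hab
      · exact Or.inr (Or.inr ⟨h.symm, h'⟩)
    · exact Or.inr (Or.inl h)
  · intro a b hab
    rw [lt1_iff] at hab
    simp only []
    rcases hab with h | ⟨h1, h2⟩
    · calc ω * (nuFn a : Ordinal) + (thetaFn a : Ordinal)
          < ω * (nuFn a : Ordinal) + ω := add_lt_add_right (nat_lt_omega0 _) _
        _ = ω * ((nuFn a : Ordinal) + 1) := (mul_add_one ω _).symm
        _ ≤ ω * (nuFn b : Ordinal) := by
            apply mul_le_mul_right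
            have : ((nuFn a : Ordinal) + 1) ≤ (nuFn b : Ordinal) := by
              exact_mod_cast h
            exact this
        _ ≤ ω * (nuFn b : Ordinal) + (thetaFn b : Ordinal) := le_self_add
    · rw [h1]
      exact add_lt_add_right (Nat.cast_lt.mpr h2) _

section Derived

variable {r : ℕ → ℕ → Prop}

lemma GoodOrder.irrefl (hr : GoodOrder r) (a : ℕ) : ¬ r a a := by
  obtain ⟨O, hO⟩ := hr.emb
  exact fun h => lt_irrefl _ (hO a a h)

lemma GoodOrder.asymm (hr : GoodOrder r) {a b : ℕ} (h : r a b) : ¬ r b a := by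
  obtain ⟨O, hO⟩ := hr.emb
  exact fun h' => lt_irrefl _ ((hO a b h).trans (hO b a h'))

lemma exists_decExpList (hr : GoodOrder r) (n : ℕ) : ∃ l, DecExpList r n l := by
  classical
  let s : ℕ → ℕ → Prop := fun a b => r b a ∨ a = b
  haveI : DecidableRel s := fun a b => Classical.propDecidable _
  haveI : IsTotal ℕ s := ⟨fun a b => by
    by_cases hab : a = b
    · exact Or.inl (Or.inr hab)
    · rcases hr.total a b hab with h | h
      · exact Or.inr (Or.inl h)
      · exact Or.inl (Or.inl h)⟩
  haveI : IsTrans ℕ s := ⟨by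
    rintro a b c (h1 | rfl) (h2 | rfl)
    · exact Or.inl (hr.trans h2 h1)
    · exact Or.inl h1
    · exact Or.inl h2
    · exact Or.inr rfl⟩
  let l0 : List ℕ := (List.range (n + 1)).filter (fun i => n.testBit i)
  have hmem0 : ∀ i, i ∈ l0 ↔ n.testBit i := by
    intro i
    simp only [l0, List.mem_filter, List.mem_range, decide_eq_true_eq]
    constructor
    · exact fun h => h.2
    · intro h
      refine ⟨?_, h⟩
      by_contra hi
      have : n < 2 ^ i := lt_of_lt_of_le (Nat.lt_two_pow_self)
        (Nat.pow_le_pow_right (by norm_num) (by omega))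
      rw [Nat.testBit_eq_false_of_lt this] at h
      exact Bool.false_ne_true h
  have hnd0 : l0.Nodup := List.nodup_range.filter _
  refine ⟨l0.insertionSort s, ?_, ?_⟩
  · have hsorted : List.Pairwise s (l0.insertionSort s) := List.pairwise_insertionSort s l0
    have hnd : (l0.insertionSort s).Nodup := (List.perm_insertionSort s l0).nodup_iff.mpr hnd0
    have hpw : (l0.insertionSort s).Pairwise (fun a b => r b a) :=
      (hsorted.and hnd).imp (by
        rintro a b ⟨h1 | h1, h2⟩
        · exact h1
        · exact absurd h1 h2)
    exact hpw.isChain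
  · intro i
    rw [(List.perm_insertionSort s l0).mem_iff]
    exact hmem0 i

lemma decExpList_unique (hr : GoodOrder r) {n : ℕ} {l l' : List ℕ}
    (h : DecExpList r n l) (h' : DecExpList r n l') : l = l' := by
  haveI : IsTrans ℕ (fun a b => r b a) := ⟨fun a b c h1 h2 => hr.trans h2 h1⟩
  haveI : IsAntisymm ℕ (fun a b => r b a) :=
    ⟨fun a b h1 h2 => absurd h2 (hr.asymm h1)⟩
  have hp : l.Pairwise (fun a b => r b a) := List.isChain_iff_pairwise.mp h.1
  have hp' : l'.Pairwise (fun a b => r b a) := List.isChain_iff_pairwise.mp h'.1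
  have hnd : l.Nodup := hp.imp (by rintro a b hab rfl; exact hr.irrefl a hab)
  have hnd' : l'.Nodup := hp'.imp (by rintro a b hab rfl; exact hr.irrefl a hab)
  have hperm : l ~ l' := (List.perm_ext_iff_of_nodup hnd hnd').mpr
    (fun i => (h.2 i).trans (h'.2 i).symm)
  exact List.Perm.eq_of_pairwise (fun a b _ _ h1 h2 => absurd h2 (hr.asymm h1)) hp hp' hperm

lemma lexTrans (tr : Transitive r) :
    ∀ {l₁ l₂ l₃ : List ℕ}, List.Lex r l₁ l₂ → List.Lex r l₂ l₃ → List.Lex r l₁ l₃ := by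
  intro l₁ l₂ l₃ h₁ h₂
  induction h₂ generalizing l₁ with
  | nil => exact absurd h₁ List.not_lex_nil
  | cons h ih =>
    cases h₁ with
    | nil => exact List.Lex.nil
    | cons h' => exact List.Lex.cons (ih h')
    | rel h' => exact List.Lex.rel h'
  | rel h =>
    cases h₁ with
    | nil => exact List.Lex.nil
    | cons h' => exact List.Lex.rel h
    | rel h' => exact List.Lex.rel (tr h' h)

lemma sum_lt_opow (O : ℕ → Ordinal) (b : Ordinal) :
    ∀ l : List ℕ, (∀ e ∈ l, O e < b) → ((l.map fun e => ω ^ O e).sum) < ω ^ b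
  | [], _ => by simpa using opow_pos b omega0_pos
  | e :: t, hl => by
    simp only [List.map_cons, List.sum_cons]
    exact principal_add_omega0_opow b
      ((opow_lt_opow_iff_right one_lt_omega0).mpr (hl e List.mem_cons_self))
      (sum_lt_opow O b t fun e' he' => hl e' (List.mem_cons_of_mem _ he'))

lemma lex_sum_lt {O : ℕ → Ordinal} (hO : ∀ a b, r a b → O a < O b) :
    ∀ {l₁ l₂ : List ℕ}, List.Lex r l₁ l₂ → l₁.Pairwise (fun a b => r b a) →
      ((l₁.map fun e => ω ^ O e).sum) < ((l₂.map fun e => ω ^ O e).sum) := by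
  intro l₁ l₂ hlex
  induction hlex with
  | @nil a l =>
    intro _
    simp only [List.map_nil, List.sum_nil, List.map_cons, List.sum_cons]
    exact lt_of_lt_of_le (opow_pos _ omega0_pos) le_self_add
  | @cons a t₁ t₂ h ih =>
    intro hp
    simp only [List.map_cons, List.sum_cons]
    exact add_lt_add_right (ih hp.of_cons) _
  | @rel a t₁ b t₂ h =>
    intro hp
    have hbound : ((List.map (fun e => ω ^ O e) (a :: t₁)).sum) < ω ^ O b := by
      apply sum_lt_opow
      intro e he
      rcases List.mem_cons.mp he with rfl | he
      · exact hO _ _ h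
      · exact (hO _ _ (List.rel_of_pairwise_cons hp he)).trans (hO _ _ h)
    calc ((List.map (fun e => ω ^ O e) (a :: t₁)).sum) < ω ^ O b := hbound
      _ ≤ ((List.map (fun e => ω ^ O e) (b :: t₂)).sum) := by
          simp only [List.map_cons, List.sum_cons]
          exact le_self_add

lemma good_derived (hr : GoodOrder r) : GoodOrder (derivedOrder r) := by
  obtain ⟨O, hO⟩ := hr.emb
  choose L hL using exists_decExpList hr
  have key : ∀ a b, derivedOrder r a b ↔ List.Lex r (L a) (L b) := by
    intro a b
    constructor
    · rintro ⟨l, l', h1, h2, h3⟩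
      rwa [decExpList_unique hr h1 (hL a), decExpList_unique hr h2 (hL b)] at h3
    · exact fun hlex => ⟨L a, L b, hL a, hL b, hlex⟩
  have hpw : ∀ a, (L a).Pairwise (fun x y => r y x) := by
    haveI : IsTrans ℕ (fun a b => r b a) := ⟨fun a b c h1 h2 => hr.trans h2 h1⟩
    exact fun a => List.isChain_iff_pairwise.mp (hL a).1
  refine ⟨?_, ?_, ?_⟩
  · intro a b c h1 h2
    rw [key] at h1 h2 ⊢
    exact lexTrans hr.trans h1 h2
  · intro a b hab
    have hLab : L a ≠ L b := fun he => hab (Nat.eq_of_testBit_eq fun i =>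
      Bool.eq_iff_iff.mpr (by rw [← (hL a).2 i, ← (hL b).2 i, he]))
    haveI : IsTrichotomous ℕ r := ⟨fun x y hxy' hyx' => by
      by_contra hxy
      rcases hr.total x y hxy with hh | hh
      · exact hxy' hh
      · exact hyx' hh⟩
    rcases trichotomous_of (List.Lex r) (L a) (L b) with hh | hh | hh
    · exact Or.inl ((key a b).mpr hh)
    · exact absurd hh hLab
    · exact Or.inr ((key b a).mpr hh)
  · refine ⟨fun m => ((L m).map fun e => ω ^ O e).sum, fun a b hab => ?_⟩
    exact lex_sum_lt hO ((key a b).mp hab) (hpw a)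

end Derived

lemma good_ltm : ∀ n, GoodOrder (ltm n)
  | 0 => good_lt1
  | 1 => good_lt1
  | (n + 2) => good_derived (good_ltm (n + 1))

/-- Fuel-indexed evaluation of the recursion scheme. -/
def Faux (g : ℕ → ℕ) (h : ℕ → ℕ → ℕ → ℕ) (φ : ℕ → ℕ) (k m a : ℕ) : ℕ :=
  Nat.rec (motive := fun _ => ℕ) (g 0) (fun i acc => h a (φ^[k - 1 - i] m) acc) k

lemma natrec_congr (x : ℕ) : ∀ (k : ℕ) (F G : ℕ → ℕ → ℕ),
    (∀ i, i < k → F i = G i) →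
    Nat.rec (motive := fun _ => ℕ) x F k = Nat.rec (motive := fun _ => ℕ) x G k
  | 0, _, _, _ => rfl
  | (k + 1), F, G, hFG => by
    have ih := natrec_congr x k F G (fun i hi => hFG i (hi.trans (Nat.lt_succ_self k)))
    show F k (Nat.rec x F k) = G k (Nat.rec x G k)
    rw [ih, hFG k (Nat.lt_succ_self k)]

lemma Faux_succ (g : ℕ → ℕ) (h : ℕ → ℕ → ℕ → ℕ) (φ : ℕ → ℕ) (k m a : ℕ) :
    Faux g h φ (k + 1) m a = h a m (Faux g h φ k (φ m) a) := by
  show h a (φ^[k + 1 - 1 - k] m)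
      (Nat.rec (motive := fun _ => ℕ) (g 0) (fun i acc => h a (φ^[k + 1 - 1 - i] m) acc) k)
    = h a m (Nat.rec (motive := fun _ => ℕ) (g 0) (fun i acc => h a (φ^[k - 1 - i] (φ m)) acc) k)
  have e1 : k + 1 - 1 - k = 0 := by omega
  rw [e1, Function.iterate_zero_apply]
  congr 1
  apply natrec_congr
  intro i hi
  funext acc
  have e2 : k + 1 - 1 - i = (k - 1 - i) + 1 := by omega
  rw [e2, Function.iterate_succ_apply]

theorem aux_rec (g : ℕ → ℕ) (h : ℕ → ℕ → ℕ → ℕ) (φ : ℕ → ℕ)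
    (hg : Computable g)
    (hh : Computable fun p : ℕ × ℕ × ℕ => h p.1 p.2.1 p.2.2)
    (hφ : Computable φ)
    (key : ∀ m : ℕ, ∃ k, φ^[k] m = 0) :
    ∃ f : ℕ → ℕ → ℕ,
      (∀ a : ℕ, f 0 a = g 0) ∧
      (∀ m : ℕ, 1 ≤ m → ∀ a : ℕ, f m a = h a m (f (φ m) a)) ∧
      Computable₂ f ∧
      (∀ f' : ℕ → ℕ → ℕ,
        (∀ a : ℕ, f' 0 a = g 0) →
        (∀ m : ℕ, 1 ≤ m → ∀ a : ℕ, f' m a = h a m (f' (φ m) a)) →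
        f' = f) := by
  set steps : ℕ → ℕ := fun m => Nat.find (key m) with hsteps
  have hspec : ∀ m, φ^[steps m] m = 0 := fun m => Nat.find_spec (key m)
  have hzero : steps 0 = 0 := by
    rw [hsteps]
    simp only [Nat.find_eq_zero]
    rfl
  have hsucc : ∀ m, m ≠ 0 → steps m = steps (φ m) + 1 := by
    intro m hm
    have h1 : φ^[steps (φ m) + 1] m = 0 := by
      rw [Function.iterate_succ_apply]
      exact hspec (φ m)
    have le1 : steps m ≤ steps (φ m) + 1 := Nat.find_le h1
    have h0 : steps m ≠ 0 := by
      intro e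
      have := hspec m
      rw [e, Function.iterate_zero_apply] at this
      exact hm this
    obtain ⟨t, ht⟩ : ∃ t, steps m = t + 1 := ⟨steps m - 1, by omega⟩
    have h2 : φ^[t] (φ m) = 0 := by
      have hsm := hspec m
      rw [ht, Function.iterate_succ_apply] at hsm
      exact hsm
    have le2 : steps (φ m) ≤ t := Nat.find_le h2
    omega
  refine ⟨fun m a => Faux g h φ (steps m) m a, ?_, ?_, ?_, ?_⟩
  · intro a
    show Faux g h φ (steps 0) 0 a = g 0
    rw [hzero]
    rfl
  · intro m hm a
    show Faux g h φ (steps m) m a = h a m (Faux g h φ (steps (φ m)) (φ m) a)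
    rw [hsucc m (by omega), Faux_succ]
  · -- computability
    have hiter : Computable fun p : ℕ × ℕ => φ^[p.1] p.2 := by
      have h1 : Computable fun p : ℕ × ℕ =>
          Nat.rec (motive := fun _ => ℕ) p.2 (fun _ ih => φ ih) p.1 :=
        Computable.nat_rec Computable.fst Computable.snd
          ((hφ.comp (Computable.snd.comp Computable.snd)).to₂)
      apply h1.of_eq
      intro p
      induction p.1 with
      | zero => rfl
      | succ k ih => rw [Function.iterate_succ_apply']; exact congrArg φ ih
    have hFaux : Computable fun p : ℕ × ℕ × ℕ => Faux g h φ p.1 p.2.1 p.2.2 := by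
      have csub1 : Computable fun x : (ℕ × ℕ × ℕ) × ℕ × ℕ => x.1.1 - 1 :=
        (Primrec.nat_sub.to_comp).comp (Computable.fst.comp Computable.fst)
          (Computable.const 1)
      have csub : Computable fun x : (ℕ × ℕ × ℕ) × ℕ × ℕ => x.1.1 - 1 - x.2.1 :=
        (Primrec.nat_sub.to_comp).comp csub1 (Computable.fst.comp Computable.snd)
      have cm : Computable fun x : (ℕ × ℕ × ℕ) × ℕ × ℕ => x.1.2.1 :=
        Computable.fst.comp (Computable.snd.comp Computable.fst)
      have citer : Computable fun x : (ℕ × ℕ × ℕ) × ℕ × ℕ => φ^[x.1.1 - 1 - x.2.1] x.1.2.1 :=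
        (hiter.comp (csub.pair cm)).of_eq (fun x => rfl)
      have ca : Computable fun x : (ℕ × ℕ × ℕ) × ℕ × ℕ => x.1.2.2 :=
        Computable.snd.comp (Computable.snd.comp Computable.fst)
      have cacc : Computable fun x : (ℕ × ℕ × ℕ) × ℕ × ℕ => x.2.2 :=
        Computable.snd.comp Computable.snd
      have hstep : Computable₂ fun (p : ℕ × ℕ × ℕ) (q : ℕ × ℕ) =>
          h p.2.2 (φ^[p.1 - 1 - q.1] p.2.1) q.2 :=
        ((hh.comp (ca.pair (citer.pair cacc))).of_eq (fun x => rfl)).to₂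
      have h2 := Computable.nat_rec Computable.fst (Computable.const (g 0)) hstep
      exact h2.of_eq (fun p => rfl)
    have hpred : Computable fun x : (ℕ × ℕ) × ℕ => decide (φ^[x.2] x.1.1 = 0) :=
      ((((Primrec.eq (α := ℕ)).decide.to_comp).comp
        ((hiter.comp (Computable.snd.pair (Computable.fst.comp Computable.fst))).of_eq
          (fun x => rfl))
        (Computable.const 0)).of_eq (fun x => rfl))
    have hrf : Partrec fun q : ℕ × ℕ =>
        Nat.rfind fun k => Part.some (decide (φ^[k] q.1 = 0)) :=
      Partrec.rfind hpred.to₂.partrec₂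
    have hmap : Partrec fun q : ℕ × ℕ =>
        (Nat.rfind fun k => Part.some (decide (φ^[k] q.1 = 0))).map
          (fun k => Faux g h φ k q.1 q.2) :=
      hrf.map (((hFaux.comp (Computable.snd.pair
        ((Computable.fst.comp Computable.fst).pair
          (Computable.snd.comp Computable.fst)))).of_eq (fun x => rfl)).to₂)
    have hco : Computable fun q : ℕ × ℕ => Faux g h φ (steps q.1) q.1 q.2 := by
      apply hmap.of_eq_tot
      intro q
      rw [Part.mem_map_iff]
      refine ⟨steps q.1, ?_, rfl⟩
      apply Nat.mem_rfind.mpr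
      constructor
      · exact Part.mem_some_iff.mpr (by simp [hspec q.1])
      · intro j hj
        exact Part.mem_some_iff.mpr (by simp [Nat.find_min (key q.1) hj])
    exact hco
  · -- uniqueness
    intro f' h0' h1'
    have main : ∀ k m a, steps m ≤ k → f' m a = Faux g h φ (steps m) m a := by
      intro k
      induction k with
      | zero =>
        intro m a hle
        have hm0 : m = 0 := by
          have h1 := hspec m
          have h2 : steps m = 0 := Nat.le_zero.mp hle
          rw [h2, Function.iterate_zero_apply] at h1
          exact h1
        subst hm0
        rw [h0' a, hzero]
        rfl
      | succ k ih =>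
        intro m a hle
        rcases eq_or_ne m 0 with rfl | hm
        · rw [h0' a, hzero]
          rfl
        · have hs := hsucc m hm
          rw [h1' m (by omega) a, ih (φ m) a (by omega), hs, Faux_succ]
    exact funext fun m => funext fun a => main (steps m) m a le_rfl

set_option maxHeartbeats 1000000 in
/-- Finite-order primitive recursion yields total computable functions: if
`g`, `h`, `φ` are total computable and `φ m <_n m` for all `m ≥ 1`, then there is
a unique total `f` with `f 0 a = g 0` and `f m a = h a m (f (φ m) a)` for `m ≥ 1`,
and this `f` is computable. -/
theorem finite_order_recursion_computable
    (n : ℕ) (hn : 1 ≤ n) (g : ℕ → ℕ) (h : ℕ → ℕ → ℕ → ℕ) (φ : ℕ → ℕ)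
    (hg : Computable g)
    (hh : Computable fun p : ℕ × ℕ × ℕ => h p.1 p.2.1 p.2.2)
    (hφ : Computable φ)
    (hdesc : ∀ m : ℕ, 1 ≤ m → ltm n (φ m) m) :
    ∃ f : ℕ → ℕ → ℕ,
      (∀ a : ℕ, f 0 a = g 0) ∧
      (∀ m : ℕ, 1 ≤ m → ∀ a : ℕ, f m a = h a m (f (φ m) a)) ∧
      Computable₂ f ∧
      (∀ f' : ℕ → ℕ → ℕ,
        (∀ a : ℕ, f' 0 a = g 0) →
        (∀ m : ℕ, 1 ≤ m → ∀ a : ℕ, f' m a = h a m (f' (φ m) a)) →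
        f' = f) := by
  obtain ⟨O, hO⟩ := (good_ltm n).emb
  have key : ∀ m : ℕ, ∃ k, φ^[k] m = 0 := by
    intro m
    refine (InvImage.wf O Ordinal.lt_wf).induction (C := fun m => ∃ k, φ^[k] m = 0) m ?_
    intro x ih
    rcases Nat.eq_zero_or_pos x with rfl | hx
    · exact ⟨0, rfl⟩
    · obtain ⟨k, hk⟩ := ih (φ x) (hO _ _ (hdesc x hx))
      exact ⟨k + 1, by rwa [Function.iterate_succ_apply]⟩
  exact aux_rec g h φ hg hh hφ key
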